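/- With the preceding data, the strong fibre product of the two 1-shifted coisotropic correspondences satisfies the non-degeneracy condition: for all v₁ ∈ V₁, v₂ ∈ V₂, α₁ ∈ V₁*, α₂ ∈ V₂*, b₁ ∈ B₁, b₃ ∈ B₃ such that c₁₂ v₁ = c₂₂ v₂, (v₁,α₁) ∈ L₁, (v₂,α₂) ∈ L₂, c₁₁ v₁ = ρ₁ b₁, c₂₃ v₂ = ρ₃ b₃, and α₁(u₁) + α₂(u₂) = σ₁(b₁)(c₁₁ u₁) − σ₃(b₃)(c₂₃ u₂) for every pair (u₁,u₂) ∈ V₁ × V₂ with c₁₂ u₁ = c₂₂ u₂, there exist a₁ ∈ A₁ and a₂ ∈ A₂ with d₁₂ a₁ = d₂₂ a₂, ρ_{A1} a₁ = v₁, ρ_{A2} a₂ = v₂, d₁₁ a₁ = b₁ and d₂₃ a₂ = b₃. (Linear core of the theorem that the strong fibre product of 1-shifted coisotropic correspondences carries a 1-shifted coisotropic structure.) -/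
import Mathlib


/-- A subspace `L ⊆ V × V*` is Lagrangian if it equals its orthogonal
complement with respect to the symmetric pairing
`⟨(v,α),(w,β)⟩ = α(w) + β(v)`. -/
def IsLagrangian {V : Type*} [AddCommGroup V] [Module ℝ V]
    (L : Submodule ℝ (V × Module.Dual ℝ V)) : Prop :=
  ∀ x : V × Module.Dual ℝ V, x ∈ L ↔ ∀ y ∈ L, x.2 y.1 + y.2 x.1 = 0

/-- Non-degeneracy of the 1-shifted coisotropic structure on the strong fibre
product of two 1-shifted coisotropic correspondences (linear core). -/
theorem strong_fibre_product_coisotropic_nondegeneracy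
    {A₁ A₂ V₁ V₂ B₁ B₂ B₃ W₁ W₂ W₃ : Type*}
    [AddCommGroup A₁] [Module ℝ A₁] [FiniteDimensional ℝ A₁]
    [AddCommGroup A₂] [Module ℝ A₂] [FiniteDimensional ℝ A₂]
    [AddCommGroup V₁] [Module ℝ V₁] [FiniteDimensional ℝ V₁]
    [AddCommGroup V₂] [Module ℝ V₂] [FiniteDimensional ℝ V₂]
    [AddCommGroup B₁] [Module ℝ B₁] [FiniteDimensional ℝ B₁]
    [AddCommGroup B₂] [Module ℝ B₂] [FiniteDimensional ℝ B₂]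
    [AddCommGroup B₃] [Module ℝ B₃] [FiniteDimensional ℝ B₃]
    [AddCommGroup W₁] [Module ℝ W₁] [FiniteDimensional ℝ W₁]
    [AddCommGroup W₂] [Module ℝ W₂] [FiniteDimensional ℝ W₂]
    [AddCommGroup W₃] [Module ℝ W₃] [FiniteDimensional ℝ W₃]
    (ρ₁ : B₁ →ₗ[ℝ] W₁) (σ₁ : B₁ →ₗ[ℝ] Module.Dual ℝ W₁)
    (ρ₂ : B₂ →ₗ[ℝ] W₂) (σ₂ : B₂ →ₗ[ℝ] Module.Dual ℝ W₂)
    (ρ₃ : B₃ →ₗ[ℝ] W₃) (σ₃ : B₃ →ₗ[ℝ] Module.Dual ℝ W₃)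
    (hH1₁ : ∀ b b' : B₁, σ₁ b (ρ₁ b') + σ₁ b' (ρ₁ b) = 0)
    (hH1₂ : ∀ b b' : B₂, σ₂ b (ρ₂ b') + σ₂ b' (ρ₂ b) = 0)
    (hH1₃ : ∀ b b' : B₃, σ₃ b (ρ₃ b') + σ₃ b' (ρ₃ b) = 0)
    (hH2₁ : ∀ b : B₁, ρ₁ b = 0 → σ₁ b = 0 → b = 0)
    (hH2₂ : ∀ b : B₂, ρ₂ b = 0 → σ₂ b = 0 → b = 0)
    (hH2₃ : ∀ b : B₃, ρ₃ b = 0 → σ₃ b = 0 → b = 0)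
    (hH3₁ : ∀ (w : W₁) (ξ : Module.Dual ℝ W₁),
      (∀ b : B₁, σ₁ b w + ξ (ρ₁ b) = 0) → ∃ b : B₁, ρ₁ b = w ∧ σ₁ b = ξ)
    (hH3₂ : ∀ (w : W₂) (ξ : Module.Dual ℝ W₂),
      (∀ b : B₂, σ₂ b w + ξ (ρ₂ b) = 0) → ∃ b : B₂, ρ₂ b = w ∧ σ₂ b = ξ)
    (hH3₃ : ∀ (w : W₃) (ξ : Module.Dual ℝ W₃),
      (∀ b : B₃, σ₃ b w + ξ (ρ₃ b) = 0) → ∃ b : B₃, ρ₃ b = w ∧ σ₃ b = ξ)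
    (ρA1 : A₁ →ₗ[ℝ] V₁) (ρA2 : A₂ →ₗ[ℝ] V₂)
    (c₁₁ : V₁ →ₗ[ℝ] W₁) (c₁₂ : V₁ →ₗ[ℝ] W₂)
    (c₂₂ : V₂ →ₗ[ℝ] W₂) (c₂₃ : V₂ →ₗ[ℝ] W₃)
    (d₁₁ : A₁ →ₗ[ℝ] B₁) (d₁₂ : A₁ →ₗ[ℝ] B₂)
    (d₂₂ : A₂ →ₗ[ℝ] B₂) (d₂₃ : A₂ →ₗ[ℝ] B₃)
    (hc₁₁ : c₁₁ ∘ₗ ρA1 = ρ₁ ∘ₗ d₁₁) (hc₁₂ : c₁₂ ∘ₗ ρA1 = ρ₂ ∘ₗ d₁₂)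
    (hc₂₂ : c₂₂ ∘ₗ ρA2 = ρ₂ ∘ₗ d₂₂) (hc₂₃ : c₂₃ ∘ₗ ρA2 = ρ₃ ∘ₗ d₂₃)
    (htrans : ∀ b : B₂, ∃ (a₁ : A₁) (a₂ : A₂), d₁₂ a₁ + d₂₂ a₂ = b)
    (L₁ : Submodule ℝ (V₁ × Module.Dual ℝ V₁)) (hL₁ : IsLagrangian L₁)
    (L₂ : Submodule ℝ (V₂ × Module.Dual ℝ V₂)) (hL₂ : IsLagrangian L₂)
    (hM1 : ∀ a : A₁, (ρA1 a, σ₁ (d₁₁ a) ∘ₗ c₁₁ - σ₂ (d₁₂ a) ∘ₗ c₁₂) ∈ L₁)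
    (hM2 : ∀ a : A₂, (ρA2 a, σ₂ (d₂₂ a) ∘ₗ c₂₂ - σ₃ (d₂₃ a) ∘ₗ c₂₃) ∈ L₂)
    (hN1 : ∀ (v : V₁) (α : Module.Dual ℝ V₁) (b₁ : B₁) (b₂ : B₂),
      (v, α) ∈ L₁ → c₁₁ v = ρ₁ b₁ → c₁₂ v = ρ₂ b₂ →
      α = σ₁ b₁ ∘ₗ c₁₁ - σ₂ b₂ ∘ₗ c₁₂ →
      ∃ a : A₁, ρA1 a = v ∧ d₁₁ a = b₁ ∧ d₁₂ a = b₂)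
    (hN2 : ∀ (v : V₂) (α : Module.Dual ℝ V₂) (b₂ : B₂) (b₃ : B₃),
      (v, α) ∈ L₂ → c₂₂ v = ρ₂ b₂ → c₂₃ v = ρ₃ b₃ →
      α = σ₂ b₂ ∘ₗ c₂₂ - σ₃ b₃ ∘ₗ c₂₃ →
      ∃ a : A₂, ρA2 a = v ∧ d₂₂ a = b₂ ∧ d₂₃ a = b₃)
    :
    ∀ (v₁ : V₁) (v₂ : V₂) (α₁ : Module.Dual ℝ V₁) (α₂ : Module.Dual ℝ V₂)
      (b₁ : B₁) (b₃ : B₃),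
      c₁₂ v₁ = c₂₂ v₂ → (v₁, α₁) ∈ L₁ → (v₂, α₂) ∈ L₂ →
      c₁₁ v₁ = ρ₁ b₁ → c₂₃ v₂ = ρ₃ b₃ →
      (∀ (u₁ : V₁) (u₂ : V₂), c₁₂ u₁ = c₂₂ u₂ →
        α₁ u₁ + α₂ u₂ = σ₁ b₁ (c₁₁ u₁) - σ₃ b₃ (c₂₃ u₂)) →
      ∃ (a₁ : A₁) (a₂ : A₂), d₁₂ a₁ = d₂₂ a₂ ∧ ρA1 a₁ = v₁ ∧ ρA2 a₂ = v₂ ∧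
        d₁₁ a₁ = b₁ ∧ d₂₃ a₂ = b₃ := by
  intro v₁ v₂ α₁ α₂ b₁ b₃ hc hv₁ hv₂ hb₁ hb₃ hpair
  classical
  -- auxiliary linear maps on V₁ × V₂
  set f : V₁ × V₂ →ₗ[ℝ] ℝ :=
    ((σ₁ b₁ ∘ₗ c₁₁ - α₁) ∘ₗ LinearMap.fst ℝ V₁ V₂) +
    ((α₂ + σ₃ b₃ ∘ₗ c₂₃) ∘ₗ LinearMap.snd ℝ V₁ V₂) with hf_def
  set g : V₁ × V₂ →ₗ[ℝ] W₂ :=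
    (c₁₂ ∘ₗ LinearMap.fst ℝ V₁ V₂) + (c₂₂ ∘ₗ LinearMap.snd ℝ V₁ V₂) with hg_def
  have hf_apply : ∀ u₁ u₂, f (u₁, u₂)
      = σ₁ b₁ (c₁₁ u₁) - α₁ u₁ + (α₂ u₂ + σ₃ b₃ (c₂₃ u₂)) := by
    intro u₁ u₂
    simp [hf_def, LinearMap.sub_apply, LinearMap.add_apply]
  have hg_apply : ∀ u₁ u₂, g (u₁, u₂) = c₁₂ u₁ + c₂₂ u₂ := by
    intro u₁ u₂; simp [hg_def]
  have hker : LinearMap.ker g ≤ LinearMap.ker f := by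
    rintro ⟨u₁, u₂⟩ hx
    rw [LinearMap.mem_ker, hg_apply] at hx
    have h12 : c₁₂ u₁ = c₂₂ (-u₂) := by
      rw [map_neg]; exact eq_neg_of_add_eq_zero_left hx
    have hp := hpair u₁ (-u₂) h12
    simp only [map_neg] at hp
    rw [LinearMap.mem_ker, hf_apply]
    linarith
  -- construct ξ : W₂* with ξ ∘ g = f
  obtain ⟨ξ, hξ⟩ : ∃ ξ : Module.Dual ℝ W₂, ∀ x : V₁ × V₂, ξ (g x) = f x := by
    obtain ⟨ξ₀, hξ₀⟩ := LinearMap.exists_extend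
      (((LinearMap.ker g).liftQ f hker) ∘ₗ (g.quotKerEquivRange).symm.toLinearMap)
    refine ⟨ξ₀, fun x => ?_⟩
    have h1 : ξ₀ ((LinearMap.range g).subtype ⟨g x, LinearMap.mem_range_self g x⟩)
        = f x := by
      rw [← LinearMap.comp_apply, hξ₀]
      simp only [LinearMap.comp_apply, LinearEquiv.coe_coe,
        LinearMap.quotKerEquivRange_symm_apply_image, Submodule.mkQ_apply,
        Submodule.liftQ_apply]
    simpa using h1
  -- ξ satisfies the orthogonality condition of (H3₂) against w := c₁₂ v₁
  have hortho : ∀ b : B₂, σ₂ b (c₁₂ v₁) + ξ (ρ₂ b) = 0 := by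
    intro b
    obtain ⟨x₁, x₂, hx⟩ := htrans b
    have hr : ρ₂ b = g (ρA1 x₁, ρA2 x₂) := by
      rw [hg_apply, ← hx, map_add,
        ← LinearMap.comp_apply c₁₂ ρA1, hc₁₂, ← LinearMap.comp_apply c₂₂ ρA2, hc₂₂]
      rfl
    have hL1p := (hL₁ (v₁, α₁)).mp hv₁ _ (hM1 x₁)
    have hL2p := (hL₂ (v₂, α₂)).mp hv₂ _ (hM2 x₂)
    simp only [LinearMap.sub_apply, LinearMap.comp_apply] at hL1p hL2p
    have e1 : ρ₁ (d₁₁ x₁) = c₁₁ (ρA1 x₁) := by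
      rw [← LinearMap.comp_apply c₁₁ ρA1, hc₁₁]; rfl
    have e3 : ρ₃ (d₂₃ x₂) = c₂₃ (ρA2 x₂) := by
      rw [← LinearMap.comp_apply c₂₃ ρA2, hc₂₃]; rfl
    have h1 : σ₁ (d₁₁ x₁) (c₁₁ v₁) + σ₁ b₁ (c₁₁ (ρA1 x₁)) = 0 := by
      rw [hb₁, ← e1]; exact hH1₁ _ _
    have h3 : σ₃ (d₂₃ x₂) (c₂₃ v₂) + σ₃ b₃ (c₂₃ (ρA2 x₂)) = 0 := by
      rw [hb₃, ← e3]; exact hH1₃ _ _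
    have hb2 : σ₂ b (c₁₂ v₁)
        = σ₂ (d₁₂ x₁) (c₁₂ v₁) + σ₂ (d₂₂ x₂) (c₂₂ v₂) := by
      rw [← hx, map_add, LinearMap.add_apply, hc]
    rw [hr, hξ, hf_apply, hb2]
    linarith
  obtain ⟨b₂, hρb₂, hσb₂⟩ := hH3₂ (c₁₂ v₁) ξ hortho
  -- recover the identities on α₁ and α₂
  have hα₁ : α₁ = σ₁ b₁ ∘ₗ c₁₁ - σ₂ b₂ ∘ₗ c₁₂ := by
    refine LinearMap.ext fun u₁ => ?_
    have h := hξ (u₁, 0)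
    rw [hg_apply, hf_apply] at h
    simp only [map_zero, add_zero] at h
    simp only [LinearMap.sub_apply, LinearMap.comp_apply, hσb₂]
    linarith
  have hα₂ : α₂ = σ₂ b₂ ∘ₗ c₂₂ - σ₃ b₃ ∘ₗ c₂₃ := by
    refine LinearMap.ext fun u₂ => ?_
    have h := hξ (0, u₂)
    rw [hg_apply, hf_apply] at h
    simp only [map_zero, zero_add, sub_zero] at h
    simp only [LinearMap.sub_apply, LinearMap.comp_apply, hσb₂]
    linarith
  obtain ⟨a₁, ha₁v, ha₁b₁, ha₁b₂⟩ := hN1 v₁ α₁ b₁ b₂ hv₁ hb₁ hρb₂.symm hα₁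
  obtain ⟨a₂, ha₂v, ha₂b₂, ha₂b₃⟩ := hN2 v₂ α₂ b₂ b₃ hv₂ (by rw [← hc, hρb₂]) hb₃ hα₂
  exact ⟨a₁, a₂, by rw [ha₁b₂, ha₂b₂], ha₁v, ha₂v, ha₁b₁, ha₂b₃⟩
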